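/- arXiv:2507.02236 — 2 statements merged into one kernel-verified Lean document; each statement's English description precedes it below -/
import Mathlib

section
/- Let n ≥ 1 be a natural number, θ < 0, m > 0 and λ > 0 real numbers. Then the transformed potential tends to a finite plateau: lim_{φ→∞} (λ/m) · ( φ·(1 − n·θ·φ^n)^(−1/n) )^m = (λ/m) · (−nθ)^(−m/n), the limit taken along φ → +∞ over the positive reals with real powers. -/
/-- For Virasoro index `n ≥ 1`, `θ < 0`, `m > 0`, `λ > 0`, the transformed
potential tends to a finite plateau:
`lim_{φ→∞} (λ/m)·(φ·(1 − nθφ^n)^{−1/n})^m = (λ/m)·(−nθ)^{−m/n}`. -/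
theorem virasoro_plateau_potential (n : ℕ) (hn : 1 ≤ n) (θ m lam : ℝ)
    (hθ : θ < 0) (hm : 0 < m) (hlam : 0 < lam) :
    Filter.Tendsto
      (fun φ : ℝ =>
        (lam / m) * (φ * (1 - (n : ℝ) * θ * φ ^ (n : ℝ)) ^ (-1 / (n : ℝ))) ^ m)
      Filter.atTop
      (nhds ((lam / m) * (-(n : ℝ) * θ) ^ (-(m / (n : ℝ))))) := by
  have hnpos : (0:ℝ) < n := by exact_mod_cast hn
  have hne : (n:ℝ) ≠ 0 := ne_of_gt hnpos
  have hc : 0 < -(n:ℝ) * θ := by nlinarith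
  have h1 : Filter.Tendsto (fun φ : ℝ => φ ^ (-(n:ℝ)) - (n:ℝ) * θ)
      Filter.atTop (nhds (-(n:ℝ) * θ)) := by
    have := (tendsto_rpow_neg_atTop hnpos).sub_const ((n:ℝ) * θ)
    simpa using this
  have h2 : Filter.Tendsto (fun φ : ℝ => (φ ^ (-(n:ℝ)) - (n:ℝ) * θ) ^ (-(m / (n:ℝ))))
      Filter.atTop (nhds ((-(n:ℝ) * θ) ^ (-(m / (n:ℝ))))) :=
    h1.rpow_const (Or.inl (ne_of_gt hc))
  refine Filter.Tendsto.congr' ?_ (h2.const_mul (lam / m))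
  filter_upwards [Filter.eventually_gt_atTop (0:ℝ)] with φ hφ
  have hB : 0 < 1 - (n:ℝ) * θ * φ ^ (n:ℝ) := by
    have : 0 < φ ^ (n:ℝ) := Real.rpow_pos_of_pos hφ _
    nlinarith
  have hA : 0 < φ ^ (-(n:ℝ)) := Real.rpow_pos_of_pos hφ _
  have hAB : φ ^ (-(n:ℝ)) * (1 - (n:ℝ) * θ * φ ^ (n:ℝ)) = φ ^ (-(n:ℝ)) - (n:ℝ) * θ := by
    have h : φ ^ (-(n:ℝ)) * φ ^ (n:ℝ) = 1 := by
      rw [← Real.rpow_add hφ]; simp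
    nlinarith [h]
  have hX : 0 < φ ^ (-(n:ℝ)) - (n:ℝ) * θ := by linarith
  have key : φ * (1 - (n:ℝ) * θ * φ ^ (n:ℝ)) ^ (-1 / (n:ℝ))
      = (φ ^ (-(n:ℝ)) - (n:ℝ) * θ) ^ (-1 / (n:ℝ)) := by
    rw [← hAB, Real.mul_rpow hA.le hB.le]
    congr 1
    rw [← Real.rpow_mul hφ.le]
    rw [show -(n:ℝ) * (-1 / (n:ℝ)) = 1 by field_simp]
    exact (Real.rpow_one φ).symm
  rw [show (φ ^ (-(n:ℝ)) - (n:ℝ) * θ) ^ (-(m / (n:ℝ)))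
      = ((φ ^ (-(n:ℝ)) - (n:ℝ) * θ) ^ (-1 / (n:ℝ))) ^ m by
    rw [← Real.rpow_mul hX.le]; ring_nf, ← key]
end

section
/- Let N ≥ 3 be a natural number (so the Virasoro index n = −N satisfies n < −2) and let θ > 0 be real. Define χ(φ) = ∫_φ^1 (1 + N·θ·t^(−N))^(1 − 1/N) dt for 0 < φ ≤ 1, the canonically normalized field measured from the reference point φ = 1. Then χ diverges as φ → 0⁺ with the power-law asymptotics lim_{φ→0⁺} φ^(N−2) · χ(φ) = (Nθ)^(1 − 1/N) / (N − 2); equivalently χ(φ) ∝ φ^{2−N} near φ = 0, which inverts to φ ≈ B_n χ^{1/(2−N)} up to the constant B_n = ((2−N)/(Nθ)^{1−1/N})^{1/(2−N)}. -/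
/-!
Writing `y = Nθ t^{-N}` and `p = 1 - 1/N ∈ [0, 1]`, the integrand `(1 + y)^p` lies between
`y^p` and `1 + y^p` by subadditivity of `x ↦ x^p`, and `y^p = (Nθ)^p t^{1-N}`. Hence
`χ(φ)` equals `(Nθ)^p (φ^{2-N} - 1)/(N - 2)` up to an error in `[0, 1]`, and after multiplying
by `φ^{N-2}` only the leading constant survives.
-/

open Real Set Filter Topology

lemma integral_rpow_neg_of_pos {s φ : ℝ} (hs : s ≠ 1) (hφ : 0 < φ) :
    ∫ t in φ..1, t ^ (-s) = (φ ^ (1 - s) - 1) / (s - 1) := by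
  rw [integral_rpow (Or.inr ⟨by contrapose! hs; linarith, notMem_uIcc_of_lt hφ one_pos⟩),
    one_rpow, show -s + 1 = 1 - s by ring]
  field_simp [sub_ne_zero.mpr hs, sub_ne_zero.mpr hs.symm]
  ring

lemma tendsto_rpow_nhdsGT_zero {r : ℝ} (hr : 0 < r) :
    Tendsto (fun φ : ℝ => φ ^ r) (𝓝[>] 0) (𝓝 0) := by
  simpa [zero_rpow hr.ne'] using
    ((continuousAt_rpow_const 0 r (Or.inr hr.le)).tendsto).mono_left nhdsWithin_le_nhds

lemma tendsto_rpow_mul_integral_rpow_neg {s : ℝ} (hs : 1 < s) :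
    Tendsto (fun φ : ℝ => φ ^ (s - 1) * ∫ t in φ..1, t ^ (-s)) (𝓝[>] 0)
      (𝓝 (1 / (s - 1))) := by
  have hlim : Tendsto (fun φ : ℝ => (1 - φ ^ (s - 1)) / (s - 1)) (𝓝[>] 0)
      (𝓝 (1 / (s - 1))) := by
    simpa using ((tendsto_rpow_nhdsGT_zero (sub_pos.mpr hs)).const_sub 1).div_const (s - 1)
  refine hlim.congr' ?_
  filter_upwards [self_mem_nhdsWithin] with φ (hφ : 0 < φ)
  rw [integral_rpow_neg_of_pos hs.ne' hφ, mul_div_assoc', mul_sub, mul_one,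
    ← rpow_add hφ, show s - 1 + (1 - s) = 0 by ring, rpow_zero]

lemma tendsto_rpow_mul_integral_of_abs_sub_le {g : ℝ → ℝ} {s c M : ℝ} (hs : 1 < s)
    (hg : ContinuousOn g (Ioc 0 1)) (hbound : ∀ t ∈ Ioc (0 : ℝ) 1, |g t - c * t ^ (-s)| ≤ M) :
    Tendsto (fun φ : ℝ => φ ^ (s - 1) * ∫ t in φ..1, g t) (𝓝[>] 0) (𝓝 (c / (s - 1))) := by
  have hrem : Tendsto (fun φ : ℝ => φ ^ (s - 1) * ∫ t in φ..1, (g t - c * t ^ (-s)))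
      (𝓝[>] 0) (𝓝 0) := by
    refine squeeze_zero_norm' ?_
      (by simpa using (tendsto_rpow_nhdsGT_zero (sub_pos.mpr hs)).mul_const M)
    filter_upwards [Ioo_mem_nhdsGT one_pos] with φ ⟨hφ0, hφ1⟩
    rw [norm_mul, Real.norm_of_nonneg (rpow_nonneg hφ0.le _)]
    refine mul_le_mul_of_nonneg_left ?_ (rpow_nonneg hφ0.le _)
    calc ‖∫ t in φ..1, (g t - c * t ^ (-s))‖ ≤ M * |1 - φ| :=
          intervalIntegral.norm_integral_le_of_norm_le_const fun t ht => by
            rw [uIoc_of_le hφ1.le] at ht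
            exact hbound t ⟨hφ0.trans ht.1, ht.2⟩
      _ ≤ M := by
          have hM : 0 ≤ M := (abs_nonneg _).trans (hbound 1 ⟨one_pos, le_rfl⟩)
          rw [abs_of_pos (sub_pos.mpr hφ1)]
          nlinarith
  have hmain := ((tendsto_rpow_mul_integral_rpow_neg hs).const_mul c).add hrem
  rw [mul_one_div, add_zero] at hmain
  refine hmain.congr' ?_
  filter_upwards [Ioo_mem_nhdsGT one_pos] with φ ⟨hφ0, hφ1⟩
  have hsub : uIcc φ 1 ⊆ Ioc 0 1 := by
    rw [uIcc_of_le hφ1.le]; exact fun t ht => ⟨hφ0.trans_le ht.1, ht.2⟩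
  have hpow : IntervalIntegrable (fun t : ℝ => t ^ (-s)) MeasureTheory.volume φ 1 :=
    intervalIntegral.intervalIntegrable_rpow (Or.inr (notMem_uIcc_of_lt hφ0 one_pos))
  rw [intervalIntegral.integral_sub ((hg.mono hsub).intervalIntegrable) (hpow.const_mul c),
    intervalIntegral.integral_const_mul]
  ring

lemma abs_one_add_rpow_sub_rpow_le {y p : ℝ} (hy : 0 ≤ y) (hp0 : 0 ≤ p) (hp1 : p ≤ 1) :
    |(1 + y) ^ p - y ^ p| ≤ 1 := by
  have hlower : y ^ p ≤ (1 + y) ^ p := rpow_le_rpow hy (by linarith) hp0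
  have hupper : (1 + y) ^ p ≤ 1 ^ p + y ^ p := by
    exact_mod_cast NNReal.rpow_add_le_add_rpow ⟨1, zero_le_one⟩ ⟨y, hy⟩ hp0 hp1
  rw [one_rpow] at hupper
  rw [abs_le]; constructor <;> linarith

/-- For Virasoro index `n = −N` with `N ≥ 3` and `θ > 0`, the canonically
normalized field `χ(φ) = ∫_φ^1 (1 + Nθt^{−N})^{1−1/N} dt` diverges as
`φ → 0⁺` with power-law asymptotics
`lim_{φ→0⁺} φ^{N−2}·χ(φ) = (Nθ)^{1−1/N}/(N−2)` (real powers). -/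
theorem canonical_field_asymptotics_neg_index (N : ℕ) (hN : 3 ≤ N) (θ : ℝ)
    (hθ : 0 < θ) :
    Filter.Tendsto
      (fun φ : ℝ => φ ^ ((N : ℝ) - 2) *
        ∫ t in φ..(1 : ℝ), (1 + (N : ℝ) * θ * t ^ (-(N : ℝ))) ^ (1 - 1 / (N : ℝ)))
      (nhdsWithin 0 (Set.Ioi 0))
      (nhds (((N : ℝ) * θ) ^ (1 - 1 / (N : ℝ)) / ((N : ℝ) - 2))) := by
  have hN3 : (3 : ℝ) ≤ N := by exact_mod_cast hN
  set p : ℝ := 1 - 1 / N with hp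
  have hp0 : 0 ≤ p := by rw [hp, sub_nonneg, div_le_one (by linarith)]; linarith
  have hp1 : p ≤ 1 := sub_le_self 1 (by positivity)
  have hexp : -(N : ℝ) * p = -((N : ℝ) - 1) := by rw [hp]; field_simp
  have hcont : ContinuousOn (fun t : ℝ => (1 + N * θ * t ^ (-(N : ℝ))) ^ p) (Ioc 0 1) := by
    refine ContinuousOn.rpow_const ?_ fun _ _ => Or.inr hp0
    exact continuousOn_const.add (continuousOn_const.mul
      (continuousOn_id.rpow_const fun t ht => Or.inl ht.1.ne'))
  have hbound : ∀ t ∈ Ioc (0 : ℝ) 1,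
      |(1 + N * θ * t ^ (-(N : ℝ))) ^ p - (N * θ) ^ p * t ^ (-((N : ℝ) - 1))| ≤ 1 := by
    intro t ht
    have ht0 : 0 ≤ t := ht.1.le
    have hy : 0 ≤ N * θ * t ^ (-(N : ℝ)) := by positivity
    rw [← hexp, rpow_mul ht0, ← mul_rpow (by positivity) (by positivity)]
    exact abs_one_add_rpow_sub_rpow_le hy hp0 hp1
  have := tendsto_rpow_mul_integral_of_abs_sub_le (by linarith) hcont hbound
  rwa [show (N : ℝ) - 1 - 1 = N - 2 by ring] at this
end
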